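/- arXiv:2512.07470 — 5 statements merged into one kernel-verified Lean document; each statement's English description precedes it below -/
import Mathlib

section
/- If q belongs to the class E, then S_1(n,q) = O(1/n²) as n → ∞, where S_1(n,q) = Σ_{k,l ∈ ℤ} C_k C_l C_{−k−l} / ( k(k+l) ), the (absolutely convergent) sum being taken over pairs (k,l) with k ∉ {0, −2n} and k + l ∉ {0, −2n} (terms with l = 0 vanish since C_0 = 0). -/
open MeasureTheory Filter Asymptotics

/-- Cosine Fourier coefficients `C_k = (1/π) ∫₀^π q(x) cos(kx) dx`. -/
noncomputable def cosCoef (q : ℝ → ℂ) (k : ℤ) : ℂ :=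
  (1 / (Real.pi : ℂ)) * ∫ x in (0:ℝ)..Real.pi, q x * Real.cos ((k : ℝ) * x)

/-- The general term of `S₁(n,q)`: `C_k C_l C_{−k−l} / (k(k+l))` over pairs `(k,l)` with
`k ∉ {0, −2n}` and `k+l ∉ {0, −2n}`. -/
noncomputable def S1term (q : ℝ → ℂ) (n : ℕ) (kl : ℤ × ℤ) : ℂ :=
  if kl.1 ≠ 0 ∧ kl.1 ≠ -(2 * (n : ℤ)) ∧ kl.1 + kl.2 ≠ 0 ∧ kl.1 + kl.2 ≠ -(2 * (n : ℤ)) then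
    cosCoef q kl.1 * cosCoef q kl.2 * cosCoef q (-(kl.1 + kl.2)) /
      ((kl.1 : ℂ) * ((kl.1 : ℂ) + (kl.2 : ℂ)))
  else 0

/-!
Substituting `m = k + l`, the terms become `C_k C_{m-k} C_m / (k m)`. Since `C` is even with
`C₀ = 0`, the unrestricted sum over `k, m ≠ 0` vanishes: the changes of variables
`(k, m) ↦ (m - k, m)` and `(k, m) ↦ (k, k - m)` preserve it, and the three transforms of each term
add up to zero because `1/(k m) + 1/((m - k) m) + 1/(k (k - m)) = 0`. Hence `S₁(n)` is minus the
sum over the two lines `k = -2n` and `m = -2n`, where `|C_j| ≤ M/|j|` bounds the terms by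
`M³/(4 n² m²)`, which sums to `O(1/n²)`.
-/

lemma cosCoef_even (q : ℝ → ℂ) : (cosCoef q).Even := fun k => by
  simp [cosCoef, neg_mul]

lemma exists_norm_cosCoef_le_mul_inv_abs {q : ℝ → ℂ} (hC0 : cosCoef q 0 = 0)
    (hE : (fun n : ℕ => cosCoef q (n : ℤ)) =O[atTop] fun n : ℕ => (1 : ℝ) / n) :
    ∃ M, ∀ k : ℤ, ‖cosCoef q k‖ ≤ M * |(k : ℝ)|⁻¹ := by
  -- at `k = 0` the bound reads `‖C₀‖ ≤ 0`, since `0⁻¹ = 0`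
  obtain ⟨M, hM⟩ := (isBigO_nat_atTop_iff fun n hn => by
    rw [show n = 0 by simpa using hn]; exact hC0).1 hE
  refine ⟨M, fun k => ?_⟩
  rcases Int.natAbs_eq k with hk | hk <;> rw [hk] <;>
    simpa [cosCoef_even q _] using hM k.natAbs

/-- `S₁` in the coordinates `(k, m) = (k, k + l)`; the division by zero makes the terms with
`k = 0` or `m = 0` vanish. -/
noncomputable def tripleTerm (c : ℤ → ℂ) (p : ℤ × ℤ) : ℂ :=
  c p.1 * c (p.2 - p.1) * c p.2 / (p.1 * p.2)

lemma tripleTerm_add_add {c : ℤ → ℂ} (hc : c.Even) (hc0 : c 0 = 0) (k m : ℤ) :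
    tripleTerm c (k, m) + tripleTerm c (m - k, m) + tripleTerm c (k, k - m) = 0 := by
  simp only [tripleTerm, sub_sub_cancel, sub_sub_cancel_left, hc m,
    show c (k - m) = c (m - k) by rw [← hc, neg_sub]]
  rcases eq_or_ne k 0 with rfl | hk
  · simp [hc0]
  rcases eq_or_ne m 0 with rfl | hm
  · simp [hc0]
  rcases eq_or_ne m k with rfl | hmk
  · simp [hc0]
  have hk' : (k : ℂ) ≠ 0 := by exact_mod_cast hk
  have hm' : (m : ℂ) ≠ 0 := by exact_mod_cast hm
  have hmk' : (m : ℂ) - k ≠ 0 := sub_ne_zero.2 (by exact_mod_cast hmk)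
  have hkm' : (k : ℂ) - m ≠ 0 := sub_ne_zero.2 (by exact_mod_cast hmk.symm)
  push_cast
  field_simp
  ring

lemma tsum_tripleTerm_eq_zero {c : ℤ → ℂ} (hc : c.Even) (hc0 : c 0 = 0)
    (hs : Summable (tripleTerm c)) : ∑' p, tripleTerm c p = 0 := by
  let A := Function.Involutive.toPerm (fun p : ℤ × ℤ => (p.2 - p.1, p.2)) fun p => by simp
  let B := Function.Involutive.toPerm (fun p : ℤ × ℤ => (p.1, p.1 - p.2)) fun p => by simp
  have hsA : Summable fun p => tripleTerm c (A p) := A.summable_iff.2 hs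
  have hsB : Summable fun p => tripleTerm c (B p) := B.summable_iff.2 hs
  have h3 : 3 * ∑' p, tripleTerm c p = 0 := calc
    3 * ∑' p, tripleTerm c p
        = ∑' p, tripleTerm c p + ∑' p, tripleTerm c (A p) + ∑' p, tripleTerm c (B p) := by
      rw [A.tsum_eq, B.tsum_eq]; ring
    _ = ∑' p, (tripleTerm c p + tripleTerm c (A p) + tripleTerm c (B p)) := by
      rw [(hs.add hsA).tsum_add hsB, hs.tsum_add hsA]
    _ = 0 := by
      simp only [A, B, Function.Involutive.toPerm, Equiv.coe_fn_mk, tripleTerm_add_add hc hc0,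
        tsum_zero]
  simpa using h3

lemma norm_le_of_le_mul_inv_abs {E : Type*} [SeminormedAddCommGroup E] {c : ℤ → E} {M : ℝ}
    (hc : ∀ k : ℤ, ‖c k‖ ≤ M * |(k : ℝ)|⁻¹) (k : ℤ) : ‖c k‖ ≤ M := by
  have hM : 0 ≤ M := by simpa using (norm_nonneg _).trans (hc 1)
  refine (hc k).trans (mul_le_of_le_one_right hM ?_)
  rcases eq_or_ne k 0 with rfl | hk
  · simp
  · exact inv_le_one_of_one_le₀ (by exact_mod_cast Int.one_le_abs hk)

lemma norm_tripleTerm_le {c : ℤ → ℂ} {M : ℝ} (hc : ∀ k : ℤ, ‖c k‖ ≤ M * |(k : ℝ)|⁻¹)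
    (p : ℤ × ℤ) : ‖tripleTerm c p‖ ≤ M ^ 3 * (1 / (p.1 : ℝ) ^ 2 * (1 / (p.2 : ℝ) ^ 2)) := by
  have hM : 0 ≤ M := (norm_nonneg _).trans (norm_le_of_le_mul_inv_abs hc 0)
  calc ‖tripleTerm c p‖
      = ‖c p.1‖ * ‖c (p.2 - p.1)‖ * ‖c p.2‖ * (|(p.1 : ℝ)|⁻¹ * |(p.2 : ℝ)|⁻¹) := by
        rw [tripleTerm, norm_div, norm_mul, norm_mul, norm_mul, Complex.norm_intCast,
          Complex.norm_intCast, div_eq_mul_inv, mul_inv]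
    _ ≤ M * |(p.1 : ℝ)|⁻¹ * M * (M * |(p.2 : ℝ)|⁻¹) * (|(p.1 : ℝ)|⁻¹ * |(p.2 : ℝ)|⁻¹) := by
        gcongr
        exacts [hc _, norm_le_of_le_mul_inv_abs hc _, hc _]
    _ = M ^ 3 * (1 / (p.1 : ℝ) ^ 2 * (1 / (p.2 : ℝ) ^ 2)) := by
        simp only [one_div, ← sq_abs (p.1 : ℝ), ← sq_abs (p.2 : ℝ)]
        ring

lemma summable_tripleTerm {c : ℤ → ℂ} {M : ℝ} (hc : ∀ k : ℤ, ‖c k‖ ≤ M * |(k : ℝ)|⁻¹) :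
    Summable (tripleTerm c) := by
  have hu : Summable fun k : ℤ => 1 / (k : ℝ) ^ 2 := Real.summable_one_div_int_pow.2 one_lt_two
  refine Summable.of_norm_bounded ((hu.mul_of_nonneg hu ?_ ?_).mul_left (M ^ 3))
    (norm_tripleTerm_le hc) <;> intro k <;> positivity

def crossLines {ι : Type*} (a : ι) : Set (ι × ι) := {p | p.1 = a ∨ p.2 = a}

lemma norm_tsum_indicator_crossLines_le {ι E : Type*} [DecidableEq ι] [NormedAddCommGroup E]
    {f : ι × ι → E} {u : ι → ℝ} {C : ℝ} (hC : 0 ≤ C) (hu0 : ∀ i, 0 ≤ u i) (hu : Summable u)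
    (hf : ∀ p, ‖f p‖ ≤ C * (u p.1 * u p.2)) (a : ι) :
    ‖∑' p, (crossLines a).indicator f p‖ ≤ 2 * C * u a * ∑' i, u i := by
  let v : ι → ℝ := Pi.single a (u a)
  have hv0 : ∀ i, 0 ≤ v i := fun i => by
    rcases eq_or_ne i a with rfl | hi <;> simp [v, *]
  have hv : Summable v := (hasSum_pi_single a (u a)).summable
  have hvu : Summable fun p : ι × ι => v p.1 * u p.2 := hv.mul_of_nonneg hu hv0 hu0
  have huv : Summable fun p : ι × ι => u p.1 * v p.2 := hu.mul_of_nonneg hv hu0 hv0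
  have hbound : ∀ p : ι × ι, ‖(crossLines a).indicator f p‖ ≤
      C * (v p.1 * u p.2 + u p.1 * v p.2) := by
    rintro ⟨i, j⟩
    by_cases hi : i = a <;> by_cases hj : j = a <;>
      simp [v, crossLines, Set.indicator, hi, hj] <;>
      nlinarith [hf (a, a), hf (a, j), hf (i, a), hu0 a, hu0 i, hu0 j]
  have hmaj : Summable fun p : ι × ι => C * (v p.1 * u p.2 + u p.1 * v p.2) :=
    (hvu.add huv).mul_left C
  have hnorm := Summable.of_nonneg_of_le (fun _ => norm_nonneg _) hbound hmaj
  calc ‖∑' p, (crossLines a).indicator f p‖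
      ≤ ∑' p : ι × ι, C * (v p.1 * u p.2 + u p.1 * v p.2) :=
        (norm_tsum_le_tsum_norm hnorm).trans (Summable.tsum_le_tsum hbound hnorm hmaj)
    _ = C * ((∑' i, v i) * (∑' i, u i) + (∑' i, u i) * (∑' i, v i)) := by
        rw [tsum_mul_left, hvu.tsum_add huv, hv.tsum_mul_tsum hu hvu, hu.tsum_mul_tsum hv huv]
    _ = 2 * C * u a * ∑' i, u i := by
        rw [(hasSum_pi_single a (u a)).tsum_eq]; ring

lemma S1term_eq_indicator_tripleTerm (q : ℝ → ℂ) (n : ℕ) (p : ℤ × ℤ) :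
    S1term q n p = (crossLines (-(2 * (n : ℤ))))ᶜ.indicator
      (tripleTerm (cosCoef q)) (Equiv.prodShear (Equiv.refl ℤ) Equiv.addLeft p) := by
  obtain ⟨k, l⟩ := p
  simp only [S1term, tripleTerm, Set.indicator, Equiv.prodShear, Equiv.coe_fn_mk,
    Equiv.refl_apply, Equiv.coe_addLeft, add_sub_cancel_left, ← cosCoef_even q (k + l),
    Set.mem_compl_iff, crossLines, Set.mem_ofPred_eq, not_or, Int.cast_add]
  by_cases hk : k = 0
  · simp [hk]
  by_cases hkl : k + l = 0
  · simp [hkl, ← Int.cast_add]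
  simp [hk, hkl]

lemma summable_S1term {q : ℝ → ℂ} (hT : Summable (tripleTerm (cosCoef q))) (n : ℕ) :
    Summable (S1term q n) :=
  ((Equiv.summable_iff _).2 (hT.indicator _)).congr fun p =>
    (S1term_eq_indicator_tripleTerm q n p).symm

lemma tsum_S1term_eq_neg {q : ℝ → ℂ} (hC0 : cosCoef q 0 = 0)
    (hT : Summable (tripleTerm (cosCoef q))) (n : ℕ) :
    ∑' p, S1term q n p =
      -∑' p, (crossLines (-(2 * (n : ℤ)))).indicator (tripleTerm (cosCoef q)) p := by
  rw [tsum_congr (S1term_eq_indicator_tripleTerm q n), Equiv.tsum_eq, eq_neg_iff_add_eq_zero,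
    ← (hT.indicator _).tsum_add (hT.indicator _)]
  simp only [Set.indicator_compl_add_self_apply, tsum_tripleTerm_eq_zero (cosCoef_even q) hC0 hT]

theorem stmt7_general (q : ℝ → ℂ)
    (hC0 : cosCoef q 0 = 0)
    (hE : (fun n : ℕ => cosCoef q (n : ℤ)) =O[atTop] fun n : ℕ => (1 : ℝ) / n) :
    (∀ n : ℕ, 1 ≤ n → Summable (S1term q n)) ∧
    (fun n : ℕ => ∑' kl : ℤ × ℤ, S1term q n kl) =O[atTop] fun n : ℕ => 1 / (n : ℝ)^2 := by
  obtain ⟨M, hM⟩ := exists_norm_cosCoef_le_mul_inv_abs hC0 hE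
  have hM0 : 0 ≤ M := (norm_nonneg _).trans (norm_le_of_le_mul_inv_abs hM 0)
  have hT : Summable (tripleTerm (cosCoef q)) := summable_tripleTerm hM
  have hu : Summable fun k : ℤ => 1 / (k : ℝ) ^ 2 := Real.summable_one_div_int_pow.2 one_lt_two
  refine ⟨fun n _ => summable_S1term hT n, ?_⟩
  refine IsBigO.of_bound (M ^ 3 * (∑' k : ℤ, 1 / (k : ℝ) ^ 2) / 2) (.of_forall fun n => ?_)
  rw [tsum_S1term_eq_neg hC0 hT, norm_neg]
  refine (norm_tsum_indicator_crossLines_le (by positivity) (fun _ => by positivity) hu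
    (norm_tripleTerm_le hM) _).trans_eq ?_
  push_cast
  rw [Real.norm_of_nonneg (by positivity)]
  ring

/-- If `q` belongs to the class `E` (i.e. `C_n = O(1/n)` and `C₀ = 0`),
then the sums `S₁(n,q)` converge absolutely and `S₁(n,q) = O(1/n²)` as `n → ∞`. -/
theorem stmt7 (q : ℝ → ℂ)
    (hint : IntervalIntegrable q volume 0 Real.pi)
    (hC0 : cosCoef q 0 = 0)
    (hE : (fun n : ℕ => cosCoef q (n : ℤ)) =O[atTop] fun n : ℕ => (1 : ℝ) / n) :
    (∀ n : ℕ, 1 ≤ n → Summable (S1term q n)) ∧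
    (fun n : ℕ => ∑' kl : ℤ × ℤ, S1term q n kl) =O[atTop] fun n : ℕ => 1 / (n : ℝ)^2 :=
  stmt7_general q hC0 hE
end

section
/- If q ∈ L¹[0,π] with C_0 = 0, then for every positive integer n the series B_{1,n}(n²) = Σ_{k ∈ ℤ, k ≠ 0, k ≠ −2n} C_k C_{k+2n} / ( n² − (n+k)² ) converges absolutely and B_{1,n}(n²) = −(1/π) ∫₀^π Q(x)² cos(2nx) dx, where Q(x) = ∫₀ˣ q(t) dt. -/
open MeasureTheory Filter Asymptotics

/-!
Let `Q x = ∫₀ˣ q`, let `S_k = (1/π) ∫₀^π Q(x) sin(kx) dx`, and let `F` be the odd extension of `Q`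
to `[-π, π]`. Since `C₀ = 0` says `Q(π) = 0`, integration by parts gives `C_k = k S_k`, so
the `k`-th term of the series is `-S_k S_{k+2n}`. The Fourier coefficients of the odd function
`F` are `F̂(k) = -i S_k`, hence that term is `-F̂(-k) F̂(k+2n)`. Parseval's identity, applied in
`L²` to the pair `conj F` and `e^{-2inx} F`, sums these products to the `2n`-th Fourier
coefficient of `F²`; as `F²` is even, that coefficient is the cosine coefficient of `Q²`.
-/

open Complex Set
open scoped Real Interval InnerProductSpace ComplexConjugate

theorem integral_primitive_mul {a b : ℝ} (hab : a ≤ b) {f g : ℝ → ℂ}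
    (hf : IntegrableOn f (Ioc a b)) (hg : IntegrableOn g (Ioc a b)) :
    ∫ x in a..b, (∫ t in a..x, f t) * g x = ∫ t in a..b, f t * ∫ x in t..b, g x := by
  set μ := volume.restrict (Ioc a b)
  set G : ℝ × ℝ → ℂ := {p | p.2 ≤ p.1}.indicator fun p => g p.1 * f p.2
  have hGint : Integrable G (μ.prod μ) :=
    (hg.mul_prod hf).indicator (measurableSet_le measurable_snd measurable_fst)
  have hinner_t : ∀ x ∈ Ioc a b, ∫ t, G (x, t) ∂μ = (∫ t in a..x, f t) * g x := by
    intro x hx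
    have hset : Iic x ∩ Ioc a b = Ioc a x := by
      ext t; simp only [mem_inter_iff, mem_Iic, mem_Ioc]; grind
    calc ∫ t, G (x, t) ∂μ = ∫ t, (Iic x).indicator (fun t => g x * f t) t ∂μ := rfl
      _ = (∫ t in a..x, f t) * g x := by
          rw [integral_indicator measurableSet_Iic, Measure.restrict_restrict measurableSet_Iic,
            hset, integral_const_mul, intervalIntegral.integral_of_le hx.1.le, mul_comm]
  have hinner_x : ∀ t ∈ Ioc a b, ∫ x, G (x, t) ∂μ = f t * ∫ x in t..b, g x := by
    intro t ht
    have hset : Ici t ∩ Ioc a b = Icc t b := by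
      ext x; simp only [mem_inter_iff, mem_Ici, mem_Ioc, mem_Icc]; grind
    calc ∫ x, G (x, t) ∂μ = ∫ x, (Ici t).indicator (fun x => g x * f t) x ∂μ := rfl
      _ = f t * ∫ x in t..b, g x := by
          rw [integral_indicator measurableSet_Ici, Measure.restrict_restrict measurableSet_Ici,
            hset, integral_Icc_eq_integral_Ioc, integral_mul_const,
            intervalIntegral.integral_of_le ht.2, mul_comm]
  calc ∫ x in a..b, (∫ t in a..x, f t) * g x = ∫ x, ∫ t, G (x, t) ∂μ ∂μ := by
        rw [intervalIntegral.integral_of_le hab]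
        exact setIntegral_congr_fun measurableSet_Ioc fun x hx => (hinner_t x hx).symm
    _ = ∫ t, ∫ x, G (x, t) ∂μ ∂μ := integral_integral_swap hGint
    _ = ∫ t in a..b, f t * ∫ x in t..b, g x := by
        rw [intervalIntegral.integral_of_le hab]
        exact setIntegral_congr_fun measurableSet_Ioc hinner_x

noncomputable def sinCoef (f : ℝ → ℂ) (k : ℤ) : ℂ :=
  (1 / (π : ℂ)) * ∫ x in (0:ℝ)..π, f x * Real.sin ((k : ℝ) * x)

theorem sinCoef_zero (f : ℝ → ℂ) : sinCoef f 0 = 0 := by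
  simp [sinCoef]

theorem sinCoef_neg (f : ℝ → ℂ) (k : ℤ) : sinCoef f (-k) = -sinCoef f k := by
  simp only [sinCoef, Int.cast_neg, neg_mul, Real.sin_neg, ofReal_neg, mul_neg,
    intervalIntegral.integral_neg]

theorem sinCoef_congr {f g : ℝ → ℂ} (h : EqOn f g (Icc 0 π)) : sinCoef f = sinCoef g := by
  ext k
  rw [sinCoef, sinCoef, intervalIntegral.integral_congr fun x hx => ?_]
  rw [uIcc_of_le Real.pi_pos.le] at hx
  rw [h hx]

theorem cosCoef_congr {f g : ℝ → ℂ} (h : EqOn f g (Icc 0 π)) : cosCoef f = cosCoef g := by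
  ext k
  rw [cosCoef, cosCoef, intervalIntegral.integral_congr fun x hx => ?_]
  rw [uIcc_of_le Real.pi_pos.le] at hx
  rw [h hx]

theorem integral_ofReal_sin_mul {k : ℝ} (hk : k ≠ 0) (a b : ℝ) :
    ∫ x in a..b, (Real.sin (k * x) : ℂ) = ((Real.cos (k * a) - Real.cos (k * b)) / k : ℝ) := by
  rw [intervalIntegral.integral_ofReal, intervalIntegral.integral_comp_mul_left _ hk,
    integral_sin, smul_eq_mul]
  field_simp

theorem cosCoef_eq_mul_sinCoef_primitive {q : ℝ → ℂ} (hq : IntervalIntegrable q volume 0 π)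
    (hq0 : ∫ x in (0:ℝ)..π, q x = 0) (k : ℤ) :
    cosCoef q k = k * sinCoef (fun x => ∫ t in (0:ℝ)..x, q t) k := by
  rcases eq_or_ne k 0 with rfl | hk
  · simp [cosCoef, hq0]
  have hkR : (k : ℝ) ≠ 0 := by exact_mod_cast hk
  have hcos : IntervalIntegrable (fun x => q x * Real.cos ((k : ℝ) * x)) volume 0 π :=
    hq.mul_continuousOn (by fun_prop)
  have hsin : IntegrableOn (fun x => (Real.sin ((k : ℝ) * x) : ℂ)) (Ioc 0 π) :=
    Continuous.integrableOn_Ioc (by fun_prop)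
  have key : ∫ x in (0:ℝ)..π, (∫ t in (0:ℝ)..x, q t) * Real.sin ((k : ℝ) * x)
      = (1 / k) * ∫ x in (0:ℝ)..π, q x * Real.cos ((k : ℝ) * x) := by
    rw [integral_primitive_mul Real.pi_pos.le hq.1 hsin]
    simp_rw [integral_ofReal_sin_mul hkR]
    calc _ = ∫ t in (0:ℝ)..π, (1 / k) * (q t * Real.cos ((k : ℝ) * t))
            - ((Real.cos ((k : ℝ) * π) : ℂ) / k) * q t := by
          congr 1; ext t; push_cast; field_simp
      _ = _ := by
          rw [intervalIntegral.integral_sub (hcos.const_mul _) (hq.const_mul _),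
            intervalIntegral.integral_const_mul, intervalIntegral.integral_const_mul, hq0]
          simp
  have hkC : (k : ℂ) ≠ 0 := by exact_mod_cast hk
  rw [sinCoef, key, cosCoef]
  field_simp

theorem intervalIntegral.integral_neg_self_eq_integral_add_comp_neg {φ : ℝ → ℂ} {a : ℝ}
    (hφ : IntervalIntegrable φ volume (-a) a) :
    ∫ x in -a..a, φ x = ∫ x in (0:ℝ)..a, (φ x + φ (-x)) := by
  have h0 : (0:ℝ) ∈ [[-a, a]] := by
    rcases le_total 0 a with ha | ha
    · exact mem_uIcc_of_le (by linarith) ha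
    · exact mem_uIcc_of_ge ha (by linarith)
  have hleft : IntervalIntegrable φ volume (-a) 0 := hφ.mono_set (uIcc_subset_uIcc_left h0)
  have hright : IntervalIntegrable φ volume 0 a := hφ.mono_set (uIcc_subset_uIcc_right h0)
  have hneg : IntervalIntegrable (fun x => φ (-x)) volume 0 a := by
    simpa using (IntervalIntegrable.iff_comp_neg).1 hleft.symm
  rw [← integral_add_adjacent_intervals hleft hright, integral_add hright hneg,
    integral_comp_neg, neg_zero, add_comm]

theorem fourierCoeffOn_neg_pi_pi_eq_integral (hπ : -π < π) {f : ℝ → ℂ}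
    (hf : IntervalIntegrable f volume (-π) π) (k : ℤ) :
    fourierCoeffOn hπ f k
      = 1 / (2 * π) * ∫ x in (0:ℝ)..π, (exp (-(k * x) * I) * f x + exp (k * x * I) * f (-x)) := by
  have hexp : ∀ x : ℝ, (fourier (-k) (x : AddCircle (π - -π)) : ℂ) = exp (-(k * x) * I) := by
    intro x
    rw [fourier_coe_apply]
    congr 1
    push_cast
    field_simp
    ring
  have hφ : IntervalIntegrable (fun x : ℝ => exp (-(k * x) * I) * f x) volume (-π) π :=
    hf.continuousOn_mul (by fun_prop)
  rw [fourierCoeffOn_eq_integral]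
  simp_rw [hexp, smul_eq_mul, Complex.real_smul,
    intervalIntegral.integral_neg_self_eq_integral_add_comp_neg hφ]
  push_cast
  simp only [mul_neg, neg_neg]
  ring

theorem fourierCoeffOn_of_odd (hπ : -π < π) {f : ℝ → ℂ} (hf : IntervalIntegrable f volume (-π) π)
    (hodd : ∀ x, f (-x) = -f x) (k : ℤ) :
    fourierCoeffOn hπ f k = -I * sinCoef f k := by
  have hpair : ∀ x : ℝ, exp (-(k * x) * I) * f x + exp (k * x * I) * f (-x)
      = -2 * I * (f x * Real.sin (k * x)) := by
    intro x
    rw [hodd, exp_mul_I, exp_mul_I, cos_neg, sin_neg]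
    push_cast
    ring
  simp_rw [fourierCoeffOn_neg_pi_pi_eq_integral hπ hf, hpair, intervalIntegral.integral_const_mul,
    sinCoef]
  field_simp

theorem fourierCoeffOn_of_even (hπ : -π < π) {f : ℝ → ℂ} (hf : IntervalIntegrable f volume (-π) π)
    (heven : ∀ x, f (-x) = f x) (k : ℤ) :
    fourierCoeffOn hπ f k = cosCoef f k := by
  have hpair : ∀ x : ℝ, exp (-(k * x) * I) * f x + exp (k * x * I) * f (-x)
      = 2 * (f x * Real.cos (k * x)) := by
    intro x
    rw [heven, exp_mul_I, exp_mul_I, cos_neg, sin_neg]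
    push_cast
    ring
  simp_rw [fourierCoeffOn_neg_pi_pi_eq_integral hπ hf, hpair, intervalIntegral.integral_const_mul,
    cosCoef]
  field_simp

theorem hasSum_fourierCoeff_mul {T : ℝ} [Fact (0 < T)] {f g : AddCircle T → ℂ}
    (hf : MemLp f 2 AddCircle.haarAddCircle) (hg : MemLp g 2 AddCircle.haarAddCircle) (m : ℤ) :
    HasSum (fun k => fourierCoeff f (-k) * fourierCoeff g (k + m)) (fourierCoeff (f * g) m) := by
  have hchar : MemLp (fourier (-m) : AddCircle T → ℂ) ⊤ AddCircle.haarAddCircle :=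
    memLp_top_of_bound (map_continuous _).aestronglyMeasurable 1
      (ae_of_all _ fun t => by rw [fourier_apply, Circle.norm_coe])
  have hX : MemLp (fun t => conj (f t)) 2 AddCircle.haarAddCircle := hf.star
  have hY : MemLp (fun t => fourier (-m) t * g t) 2 AddCircle.haarAddCircle := hg.mul' hchar
  have hXk : ∀ k : ℤ, ⟪hX.toLp, fourierBasis k⟫_ℂ = fourierCoeff f (-k) := by
    intro k
    rw [← inner_conj_symm, ← HilbertBasis.repr_apply_apply, fourierBasis_repr,
      fourierCoeff_congr_ae hX.coeFn_toLp]
    simp only [fourierCoeff, ← integral_conj, smul_eq_mul, map_mul, conj_conj, ← fourier_neg,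
      neg_neg]
  have hYk : ∀ k : ℤ, ⟪fourierBasis k, hY.toLp⟫_ℂ = fourierCoeff g (k + m) := by
    intro k
    rw [← HilbertBasis.repr_apply_apply, fourierBasis_repr, fourierCoeff_congr_ae hY.coeFn_toLp]
    simp only [fourierCoeff, smul_eq_mul, ← mul_assoc, ← fourier_add, neg_add]
  have hXY : ⟪hX.toLp, hY.toLp⟫_ℂ = fourierCoeff (f * g) m := by
    rw [L2.inner_def, fourierCoeff]
    refine integral_congr_ae ?_
    filter_upwards [hX.coeFn_toLp, hY.coeFn_toLp] with t hXt hYt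
    rw [RCLike.inner_apply, hXt, hYt, conj_conj, smul_eq_mul, Pi.mul_apply]
    ring
  simpa only [hXk, hYk, hXY] using fourierBasis.hasSum_inner_mul_inner hX.toLp hY.toLp

theorem hasSum_fourierCoeffOn_mul {a b : ℝ} (hab : a < b) {f g : ℝ → ℂ}
    (hf : MemLp f 2 (volume.restrict (Ioc a b))) (hg : MemLp g 2 (volume.restrict (Ioc a b)))
    (m : ℤ) :
    HasSum (fun k => fourierCoeffOn hab f (-k) * fourierCoeffOn hab g (k + m))
      (fourierCoeffOn hab (f * g) m) := by
  have := Fact.mk (sub_pos.2 hab)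
  rw [← add_sub_cancel a b] at hf hg
  exact hasSum_fourierCoeff_mul hf.memLp_liftIoc.haarAddCircle hg.memLp_liftIoc.haarAddCircle m

theorem Continuous.memLp_restrict_Ioc {E : Type*} [NormedAddCommGroup E] {f : ℝ → E}
    (hf : Continuous f) (p : ENNReal) (a b : ℝ) : MemLp f p (volume.restrict (Ioc a b)) := by
  obtain ⟨C, hC⟩ := (isCompact_Icc (a := a) (b := b)).exists_bound_of_continuousOn hf.continuousOn
  refine MemLp.of_bound hf.aestronglyMeasurable C ?_
  filter_upwards [ae_restrict_mem measurableSet_Ioc] with x hx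
  exact hC x (Ioc_subset_Icc_self hx)

/-- The odd extension of `x ↦ ∫₀ˣ q` from `[0, π]`, written as a single integral so that it is
odd and continuous on all of `ℝ`. -/
noncomputable def oddPrimitive (q : ℝ → ℂ) (x : ℝ) : ℂ :=
  ∫ t in -x..x, (Ioc 0 π).indicator q t

theorem oddPrimitive_neg (q : ℝ → ℂ) (x : ℝ) : oddPrimitive q (-x) = -oddPrimitive q x := by
  rw [oddPrimitive, oddPrimitive, neg_neg, intervalIntegral.integral_symm]

theorem continuous_oddPrimitive {q : ℝ → ℂ} (hq : IntegrableOn q (Ioc 0 π)) :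
    Continuous (oddPrimitive q) := by
  have hP : Continuous fun x => ∫ t in (0:ℝ)..x, (Ioc 0 π).indicator q t :=
    intervalIntegral.continuous_primitive
      (fun _ _ => (hq.integrable_indicator measurableSet_Ioc).intervalIntegrable) 0
  have : oddPrimitive q = fun x => (∫ t in (0:ℝ)..x, (Ioc 0 π).indicator q t)
      - ∫ t in (0:ℝ)..(-x), (Ioc 0 π).indicator q t :=
    funext fun x => (intervalIntegral.integral_interval_sub_left
      (hq.integrable_indicator measurableSet_Ioc).intervalIntegrable
      (hq.integrable_indicator measurableSet_Ioc).intervalIntegrable).symm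
  exact this ▸ hP.sub (hP.comp continuous_neg)

theorem oddPrimitive_eq_integral (q : ℝ → ℂ) {x : ℝ} (hx : x ∈ Icc 0 π) :
    oddPrimitive q x = ∫ t in (0:ℝ)..x, q t := by
  have hset : Ioc (-x) x ∩ Ioc 0 π = Ioc 0 x := by
    ext t; simp only [mem_inter_iff, mem_Ioc]; grind
  rw [oddPrimitive, intervalIntegral.integral_of_le (by linarith [hx.1]),
    setIntegral_indicator measurableSet_Ioc, hset, intervalIntegral.integral_of_le hx.1]

theorem fourierCoeffOn_oddPrimitive (hπ : -π < π) {q : ℝ → ℂ} (hq : IntegrableOn q (Ioc 0 π))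
    (k : ℤ) :
    fourierCoeffOn hπ (oddPrimitive q) k = -I * sinCoef (fun x => ∫ t in (0:ℝ)..x, q t) k := by
  rw [fourierCoeffOn_of_odd hπ ((continuous_oddPrimitive hq).intervalIntegrable _ _)
    (oddPrimitive_neg q), sinCoef_congr fun x hx => oddPrimitive_eq_integral q hx]

theorem fourierCoeffOn_oddPrimitive_mul_self (hπ : -π < π) {q : ℝ → ℂ}
    (hq : IntegrableOn q (Ioc 0 π)) (k : ℤ) :
    fourierCoeffOn hπ (oddPrimitive q * oddPrimitive q) k
      = cosCoef (fun x => (∫ t in (0:ℝ)..x, q t) ^ 2) k := by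
  have hF := continuous_oddPrimitive hq
  have heven : ∀ x, (oddPrimitive q * oddPrimitive q) (-x) = (oddPrimitive q * oddPrimitive q) x :=
    fun x => by simp [oddPrimitive_neg]
  have hsq : EqOn (oddPrimitive q * oddPrimitive q) (fun x => (∫ t in (0:ℝ)..x, q t) ^ 2)
      (Icc 0 π) := fun x hx => by simp [oddPrimitive_eq_integral q hx, sq]
  rw [fourierCoeffOn_of_even hπ ((hF.mul hF).intervalIntegrable _ _) heven, cosCoef_congr hsq]

theorem mul_div_sq_sub_sq_eq_neg_mul {C S : ℤ → ℂ} (hCS : ∀ k, C k = k * S k) (hS0 : S 0 = 0)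
    (n : ℕ) (k : ℤ) :
    (if k ≠ 0 ∧ k ≠ -(2 * (n : ℤ)) then
        C k * C (k + 2 * n) / ((n : ℂ) ^ 2 - ((n : ℂ) + (k : ℂ)) ^ 2) else 0)
      = -(S k * S (k + 2 * n)) := by
  by_cases hk : k ≠ 0 ∧ k ≠ -(2 * (n : ℤ))
  · have hk0 : (k : ℂ) ≠ 0 := by exact_mod_cast hk.1
    have hk2 : (k : ℂ) + 2 * n ≠ 0 := by exact_mod_cast (by omega : k + 2 * (n : ℤ) ≠ 0)
    have hden : (n : ℂ) ^ 2 - ((n : ℂ) + k) ^ 2 = -(k * (k + 2 * n)) := by ring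
    rw [if_pos hk, hCS, hCS, hden]
    push_cast
    field_simp
  · rw [if_neg hk]
    rcases not_and_or.1 hk with hk | hk <;> push Not at hk <;> subst hk <;> simp [hS0]

theorem stmt9_general (q : ℝ → ℂ)
    (hint : IntervalIntegrable q volume 0 Real.pi)
    (hC0 : cosCoef q 0 = 0)
    (n : ℕ) :
    Summable (fun k : ℤ =>
      if k ≠ 0 ∧ k ≠ -(2 * (n : ℤ)) then
        cosCoef q k * cosCoef q (k + 2 * n) / (((n : ℂ))^2 - ((n : ℂ) + (k : ℂ))^2) else 0) ∧
    (∑' k : ℤ,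
      if k ≠ 0 ∧ k ≠ -(2 * (n : ℤ)) then
        cosCoef q k * cosCoef q (k + 2 * n) / (((n : ℂ))^2 - ((n : ℂ) + (k : ℂ))^2) else 0)
      = -(1 / (Real.pi : ℂ)) *
          ∫ x in (0:ℝ)..Real.pi, (∫ t in (0:ℝ)..x, q t)^2 * Real.cos (2 * (n : ℝ) * x) := by
  have hπ : -π < π := neg_lt_self Real.pi_pos
  have hF := continuous_oddPrimitive hint.1
  have hq0 : ∫ x in (0:ℝ)..π, q x = 0 := by simpa [cosCoef] using hC0
  have hterm : ∀ k : ℤ, (if k ≠ 0 ∧ k ≠ -(2 * (n : ℤ)) then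
        cosCoef q k * cosCoef q (k + 2 * n) / (((n : ℂ))^2 - ((n : ℂ) + (k : ℂ))^2) else 0)
      = -(fourierCoeffOn hπ (oddPrimitive q) (-k)
          * fourierCoeffOn hπ (oddPrimitive q) (k + 2 * n)) := by
    intro k
    rw [mul_div_sq_sub_sq_eq_neg_mul (cosCoef_eq_mul_sinCoef_primitive hint hq0) (sinCoef_zero _),
      fourierCoeffOn_oddPrimitive hπ hint.1, fourierCoeffOn_oddPrimitive hπ hint.1, sinCoef_neg]
    linear_combination -(sinCoef _ k * sinCoef _ (k + 2 * n)) * I_sq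
  have hvalue : -fourierCoeffOn hπ (oddPrimitive q * oddPrimitive q) (2 * n)
      = -(1 / (Real.pi : ℂ)) *
          ∫ x in (0:ℝ)..Real.pi, (∫ t in (0:ℝ)..x, q t)^2 * Real.cos (2 * (n : ℝ) * x) := by
    rw [fourierCoeffOn_oddPrimitive_mul_self hπ hint.1, cosCoef, neg_mul]
    push_cast
    rfl
  have hB := (hasSum_fourierCoeffOn_mul hπ (hF.memLp_restrict_Ioc 2 _ _)
    (hF.memLp_restrict_Ioc 2 _ _) (2 * n)).neg
  rw [hvalue, ← funext hterm] at hB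
  exact ⟨hB.summable, hB.tsum_eq⟩

/-- If `q ∈ L¹[0,π]` with `C₀ = 0`, then for every positive integer `n`
the series `B_{1,n}(n²) = Σ_{k ≠ 0, −2n} C_k C_{k+2n}/(n² − (n+k)²)` converges absolutely
and equals `−(1/π)∫₀^π Q(x)² cos(2nx) dx`, where `Q(x) = ∫₀ˣ q(t) dt`. -/
theorem stmt9 (q : ℝ → ℂ)
    (hint : IntervalIntegrable q volume 0 Real.pi)
    (hC0 : cosCoef q 0 = 0)
    (n : ℕ) (hn : 1 ≤ n) :
    Summable (fun k : ℤ =>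
      if k ≠ 0 ∧ k ≠ -(2 * (n : ℤ)) then
        cosCoef q k * cosCoef q (k + 2 * n) / (((n : ℂ))^2 - ((n : ℂ) + (k : ℂ))^2) else 0) ∧
    (∑' k : ℤ,
      if k ≠ 0 ∧ k ≠ -(2 * (n : ℤ)) then
        cosCoef q k * cosCoef q (k + 2 * n) / (((n : ℂ))^2 - ((n : ℂ) + (k : ℂ))^2) else 0)
      = -(1 / (Real.pi : ℂ)) *
          ∫ x in (0:ℝ)..Real.pi, (∫ t in (0:ℝ)..x, q t)^2 * Real.cos (2 * (n : ℝ) * x) :=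
  stmt9_general q hint hC0 n
end

section
/- Let q be the Kronig–Penney potential, let n ≥ 1 satisfy Condition 1, let λ_n be a Dirichlet eigenvalue of L(q) with |λ_n − n²| ≤ M, and let Ψ_n be a corresponding eigenfunction with ∫₀^π |Ψ_n(x)|² dx = 1. Then ∫₀^π Ψ_n(x) sin(nx) dx ≠ 0. -/
open MeasureTheory Filter Asymptotics

/-- Cosine Fourier coefficients `C_k = (1/π) ∫₀^π q(x) cos(kx) dx` of a real potential. -/
noncomputable def cosCoefR (q : ℝ → ℝ) (k : ℤ) : ℝ :=
  (1 / Real.pi) * ∫ x in (0:ℝ)..Real.pi, q x * Real.cos ((k : ℝ) * x)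

/-- `λ` is a Dirichlet eigenvalue of `L(q) = −d²/dx² + q` on `[0,π]` with eigenfunction `y`:
`y` is nontrivial, `y, y′` are absolutely continuous, `−y″ + q y = λ y` a.e. and
`y(0) = y(π) = 0`.  Absolute continuity and the a.e. differential equation are expressed
in their equivalent integral form. -/
def IsDirichletEigenpair (q : ℝ → ℂ) (lam : ℂ) (y : ℝ → ℂ) : Prop :=
  ∃ g : ℝ → ℂ,
    (∃ x ∈ Set.Icc (0:ℝ) Real.pi, y x ≠ 0) ∧
    IntervalIntegrable g volume 0 Real.pi ∧
    IntervalIntegrable (fun t => (q t - lam) * y t) volume 0 Real.pi ∧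
    (∀ x ∈ Set.Icc (0:ℝ) Real.pi, y x = y 0 + ∫ t in (0:ℝ)..x, g t) ∧
    (∀ x ∈ Set.Icc (0:ℝ) Real.pi, g x = g 0 + ∫ t in (0:ℝ)..x, (q t - lam) * y t) ∧
    y 0 = 0 ∧ y Real.pi = 0

/-- `λ` is a Dirichlet eigenvalue of `L(q)` on `[0,π]`. -/
def IsDirichletEV (q : ℝ → ℂ) (lam : ℂ) : Prop :=
  ∃ y : ℝ → ℂ, IsDirichletEigenpair q lam y

/-- Condition 1 for the index `n`: `M ≤ 1/2` if `n = 1`, and `M < (2n−1)/2` if `n > 1`. -/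
def Cond1 (M : ℝ) (n : ℕ) : Prop :=
  (n = 1 → M ≤ 1 / 2) ∧ (1 < n → M < (2 * (n : ℝ) - 1) / 2)

/-- The partial sum `n_1 + ⋯ + n_{j}` of the multi-index `v = (n_1, …, n_k)`. -/
def psum {k : ℕ} (v : Fin k → ℤ) (j : Fin k) : ℤ :=
  ∑ i ∈ Finset.univ.filter (fun i => i ≤ j), v i

/-- Admissibility of a multi-index: every partial sum avoids `0` and `−2n`. -/
def adm (n : ℕ) {k : ℕ} (v : Fin k → ℤ) : Prop :=
  ∀ j : Fin k, psum v j ≠ 0 ∧ psum v j ≠ -(2 * (n : ℤ))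

instance (n : ℕ) {k : ℕ} (v : Fin k → ℤ) : Decidable (adm n v) := by
  unfold adm; infer_instance

/-- The general term of `a_k(λ)`:
`C_{n_1}⋯C_{n_k}(C_{n_1+⋯+n_k} − C_{n_1+⋯+n_k+2n}) / Π_j (λ − (n+n_1+⋯+n_j)²)`. -/
noncomputable def aTerm (C : ℤ → ℝ) (n : ℕ) (k : ℕ) (lam : ℝ) (v : Fin k → ℤ) : ℝ :=
  if adm n v then
    ((∏ i, C (v i)) * (C (∑ i, v i) - C ((∑ i, v i) + 2 * n))) /
      ∏ j, (lam - ((n : ℝ) + ((psum v j : ℤ) : ℝ))^2)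
  else 0

/-- `a_k(λ)`, the full series over `ℤ^k` of admissible multi-indices. -/
noncomputable def aSum (C : ℤ → ℝ) (n k : ℕ) (lam : ℝ) : ℝ :=
  ∑' v : Fin k → ℤ, aTerm C n k lam v

/-- The truncated sum `a_{r,k,n}(λ)`, over multi-indices with entries in `[−r, r]`. -/
noncomputable def aTrunc (C : ℤ → ℝ) (n k r : ℕ) (lam : ℝ) : ℝ :=
  ∑' v : Fin k → ℤ,
    if ∀ i, -(r : ℤ) ≤ v i ∧ v i ≤ (r : ℤ) then aTerm C n k lam v else 0

/-- `g_n(λ) = −C_{2n} + Σ_{k=1}^{s} a_{r,k,n}(λ)`. -/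
noncomputable def gFun (C : ℤ → ℝ) (n r s : ℕ) (lam : ℝ) : ℝ :=
  -C (2 * n) + ∑ k ∈ Finset.Icc 1 s, aTrunc C n k r lam

/-! If `∫ Ψ sin(nx) = 0`, the sine coefficients `u_k = ∫ Ψ sin(kx)` vanish for `k² = n²` (and
`k = 0`), while two integrations by parts in the eigenvalue equation give
`∫ q Ψ sin(kx) = (λ - k²) u_k`. For the remaining `k`, Condition 1 gives `|k² - n²| ≥ γ` with
`2M < γ`, so `|λ - k²| ≥ γ - M > M`. Parseval's identity for the sine system (the Fourier series
of the odd extension of `Ψ` to `(-π, π]`) turns this into `(γ - M)² ‖Ψ‖² ≤ ‖q Ψ‖² ≤ M² ‖Ψ‖²`,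
forcing `‖Ψ‖ = 0`, which contradicts the normalisation. -/

open Set intervalIntegral
open scoped Real

theorem intervalIntegral.integral_primitive_mul_eq_integral_mul_integral {a b : ℝ} (hab : a ≤ b)
    {f φ : ℝ → ℂ} (hf : IntervalIntegrable f volume a b) (hφ : IntervalIntegrable φ volume a b) :
    ∫ x in a..b, (∫ t in a..x, f t) * φ x = ∫ t in a..b, f t * ∫ x in t..b, φ x := by
  set μ := volume.restrict (Ioc a b)
  set K : ℝ × ℝ → ℂ := {p : ℝ × ℝ | p.2 ≤ p.1}.indicator fun p => φ p.1 * f p.2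
  have hK : Integrable K (μ.prod μ) :=
    ((hφ.def'.mono_set (by rw [uIoc_of_le hab])).mul_prod
      (hf.def'.mono_set (by rw [uIoc_of_le hab]))).indicator
      (measurableSet_le measurable_snd measurable_fst)
  have hL : ∫ x in a..b, (∫ t in a..x, f t) * φ x = ∫ x, ∫ t, K (x, t) ∂μ ∂μ := by
    rw [integral_of_le hab]
    refine setIntegral_congr_fun measurableSet_Ioc fun x hx => ?_
    have : ∫ t, K (x, t) ∂μ = ∫ t in Ioc a b, (Ioc a x).indicator (fun t => φ x * f t) t :=
      setIntegral_congr_fun measurableSet_Ioc fun t ht => by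
        simp [K, indicator_apply, ht.1]
    rw [this, setIntegral_indicator measurableSet_Ioc, Ioc_inter_Ioc, max_self,
      min_eq_right hx.2, MeasureTheory.integral_const_mul, ← integral_of_le hx.1.le, mul_comm]
  have hR : ∫ t in a..b, f t * ∫ x in t..b, φ x = ∫ t, ∫ x, K (x, t) ∂μ ∂μ := by
    rw [integral_of_le hab]
    refine setIntegral_congr_fun measurableSet_Ioc fun t ht => ?_
    have : ∫ x, K (x, t) ∂μ = ∫ x in Ioc a b, (Ioc t b).indicator (fun x => φ x * f t) x := by
      refine MeasureTheory.integral_congr_ae ?_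
      filter_upwards [ae_restrict_mem measurableSet_Ioc,
        ae_restrict_of_ae (Measure.ae_ne volume t)] with x hx hxt
      by_cases h : t < x
      · simp [K, hx.2, h, h.le]
      · simp [K, h, (lt_of_le_of_ne (not_lt.1 h) hxt).not_ge]
    rw [this, setIntegral_indicator measurableSet_Ioc, Ioc_inter_Ioc, min_self,
      max_eq_right ht.1.le, MeasureTheory.integral_mul_const, ← integral_of_le ht.2, mul_comm]
  rw [hL, hR, integral_integral_swap (f := fun x t => K (x, t)) hK]

-- `F` is only absolutely continuous, so this goes through Fubini, not a pointwise derivative.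
theorem intervalIntegral.integral_mul_deriv_eq_of_primitive {a b : ℝ} (hab : a ≤ b)
    {F f φ φ' : ℝ → ℂ} (hf : IntervalIntegrable f volume a b)
    (hF : ∀ x ∈ Icc a b, F x = F a + ∫ t in a..x, f t)
    (hφ : ∀ x ∈ Icc a b, HasDerivAt φ (φ' x) x) (hφ' : IntervalIntegrable φ' volume a b) :
    ∫ x in a..b, F x * φ' x = F b * φ b - F a * φ a - ∫ x in a..b, f x * φ x := by
  have hφ_sub : ∀ t ∈ Icc a b, ∫ x in t..b, φ' x = φ b - φ t := fun t ht =>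
    integral_eq_sub_of_hasDerivAt (fun x hx => hφ x (by
      rw [uIcc_of_le ht.2] at hx; exact ⟨ht.1.trans hx.1, hx.2⟩))
      (hφ'.mono_set (by rw [uIcc_of_le ht.2, uIcc_of_le hab]; exact Icc_subset_Icc_left ht.1))
  have hφ_cont : ContinuousOn φ (Icc a b) := fun x hx => (hφ x hx).continuousAt.continuousWithinAt
  have hprim : ContinuousOn (fun x => ∫ t in a..x, f t) (Icc a b) := by
    simpa [uIcc_of_le hab] using continuousOn_primitive_interval' hf left_mem_uIcc
  have hfb : ∫ t in a..b, f t = F b - F a := by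
    rw [hF b ⟨hab, le_rfl⟩]; ring
  calc ∫ x in a..b, F x * φ' x
      = ∫ x in a..b, (F a * φ' x + (∫ t in a..x, f t) * φ' x) :=
        integral_congr fun x hx => by
          rw [uIcc_of_le hab] at hx; rw [hF x hx]; ring
    _ = F a * (φ b - φ a) + ∫ t in a..b, f t * (φ b - φ t) := by
        rw [integral_add (hφ'.const_mul _) (hφ'.continuousOn_mul (by rwa [uIcc_of_le hab])),
          integral_const_mul, integral_primitive_mul_eq_integral_mul_integral hab hf hφ',
          hφ_sub a ⟨le_rfl, hab⟩]
        congr 1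
        refine integral_congr fun t ht => ?_
        rw [uIcc_of_le hab] at ht; rw [hφ_sub t ht]
    _ = F b * φ b - F a * φ a - ∫ x in a..b, f x * φ x := by
        have hfφ : IntervalIntegrable (fun x => f x * φ x) volume a b :=
          hf.mul_continuousOn (by rwa [uIcc_of_le hab])
        simp_rw [mul_sub]
        rw [integral_sub (hf.mul_const _) hfφ, integral_mul_const, hfb]
        ring

theorem intervalIntegral.integral_neg_self_eq_integral_add_comp_neg_s12 {E : Type*}
    [NormedAddCommGroup E] [NormedSpace ℝ E] [CompleteSpace E] {a : ℝ} {f : ℝ → E}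
    (hf : IntervalIntegrable f volume (-a) a) :
    ∫ x in -a..a, f x = ∫ x in 0..a, (f x + f (-x)) := by
  have hneg : IntervalIntegrable f volume (-a) 0 := hf.mono_set (uIcc_subset_uIcc_left
    (by simp [uIcc, le_total]))
  have hpos : IntervalIntegrable f volume 0 a := hf.mono_set (uIcc_subset_uIcc_right
    (by simp [uIcc, le_total]))
  have hneg' : IntervalIntegrable (fun x => f (-x)) volume 0 a := by
    simpa using ((IntervalIntegrable.iff_comp_neg (f := f)).1 hneg).symm
  rw [← integral_add_adjacent_intervals hneg hpos, integral_add hpos hneg', integral_comp_neg,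
    neg_zero, add_comm]

theorem intervalIntegral.integral_sq_norm_mul_le {a b M : ℝ} (hab : a ≤ b) {q y : ℝ → ℂ}
    (hy : MemLp y 2 (volume.restrict (Ioc a b))) (hq : ∀ x ∈ Ioc a b, ‖q x‖ ≤ M) :
    ∫ x in a..b, ‖q x * y x‖ ^ 2 ≤ M ^ 2 * ∫ x in a..b, ‖y x‖ ^ 2 := by
  rw [← integral_const_mul, integral_of_le hab, integral_of_le hab]
  refine integral_mono_of_nonneg (ae_of_all _ fun x => by positivity)
    (((memLp_two_iff_integrable_sq_norm hy.1).1 hy).const_mul _) ?_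
  filter_upwards [ae_restrict_mem measurableSet_Ioc] with x hx
  rw [norm_mul, mul_pow]
  gcongr
  exact hq x hx

noncomputable def sinCoeff (f : ℝ → ℂ) (k : ℤ) : ℂ :=
  ∫ x in 0..π, f x * (Real.sin (k * x) : ℂ)

@[simp] theorem sinCoeff_zero (f : ℝ → ℂ) : sinCoeff f 0 = 0 := by simp [sinCoeff]

theorem sinCoeff_neg (f : ℝ → ℂ) (k : ℤ) : sinCoeff f (-k) = -sinCoeff f k := by
  simp [sinCoeff, neg_mul, Real.sin_neg, ← intervalIntegral.integral_neg]

theorem sinCoeff_eq_zero_of_sq_eq {f : ℝ → ℂ} {k n : ℤ} (hn : sinCoeff f n = 0)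
    (hk : k ^ 2 = n ^ 2) : sinCoeff f k = 0 := by
  rcases sq_eq_sq_iff_eq_or_eq_neg.1 hk with rfl | rfl
  · exact hn
  · rw [sinCoeff_neg, hn, neg_zero]

noncomputable def oddExtension (f : ℝ → ℂ) (x : ℝ) : ℂ := if 0 < x then f x else -f (-x)

theorem oddExtension_of_pos {f : ℝ → ℂ} {x : ℝ} (hx : 0 < x) : oddExtension f x = f x :=
  if_pos hx

theorem oddExtension_neg_of_pos {f : ℝ → ℂ} {x : ℝ} (hx : 0 < x) :
    oddExtension f (-x) = -f x := by
  simp [oddExtension, hx.le]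

theorem memLp_two_oddExtension {f : ℝ → ℂ} {a : ℝ} (ha : 0 ≤ a)
    (hf : MemLp f 2 (volume.restrict (Ioc 0 a))) :
    MemLp (oddExtension f) 2 (volume.restrict (Ioc (-a) a)) := by
  have hpos : MemLp (oddExtension f) 2 (volume.restrict (Ioc 0 a)) :=
    hf.ae_eq ((ae_restrict_mem measurableSet_Ioc).mono fun x hx => (oddExtension_of_pos hx.1).symm)
  have hneg : MemLp (oddExtension f) 2 (volume.restrict (Ioc (-a) 0)) := by
    rw [← Measure.restrict_congr_set Ico_ae_eq_Ioc] at hf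
    have hmp := (Measure.measurePreserving_neg (volume : Measure ℝ)).restrict_preimage
      (measurableSet_Ico (a := 0) (b := a))
    have : Neg.neg ⁻¹' Ico 0 a = Ioc (-a) 0 := by simp
    rw [this] at hmp
    refine (hf.comp_measurePreserving hmp).neg.ae_eq ?_
    filter_upwards [ae_restrict_mem measurableSet_Ioc,
      ae_restrict_of_ae (Measure.ae_ne volume 0)] with x hx hx0
    have : 0 < -x := neg_pos.2 (lt_of_le_of_ne hx.2 hx0)
    simpa using (oddExtension_neg_of_pos (f := f) this).symm
  rw [← Ioc_union_Ioc_eq_Ioc (neg_nonpos.2 ha) ha, memLp_two_iff_integrable_sq_norm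
    (aestronglyMeasurable_union_iff.2 ⟨hneg.1, hpos.1⟩)]
  exact IntegrableOn.union ((memLp_two_iff_integrable_sq_norm hneg.1).1 hneg)
    ((memLp_two_iff_integrable_sq_norm hpos.1).1 hpos)

theorem fourier_neg_coe_two_pi (k : ℤ) (x : ℝ) :
    (fourier (-k) (x : AddCircle (π - -π)) : ℂ)
      = Complex.exp (-(k * x : ℝ) * Complex.I) := by
  rw [fourier_coe_apply]
  congr 1
  push_cast
  field_simp
  ring

theorem Complex.exp_neg_mul_I_sub_exp_mul_I (z : ℂ) :
    Complex.exp (-(z * Complex.I)) - Complex.exp (z * Complex.I)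
      = -2 * Complex.I * Complex.sin z := by
  rw [Complex.sin, neg_mul]
  ring_nf
  rw [Complex.I_sq]
  ring

theorem fourierCoeffOn_oddExtension {f : ℝ → ℂ}
    (hf : MemLp f 2 (volume.restrict (Ioc 0 π))) (k : ℤ) :
    fourierCoeffOn (neg_lt_self Real.pi_pos) (oddExtension f) k
      = -(Complex.I / π) * sinCoeff f k := by
  have hG := memLp_two_oddExtension Real.pi_pos.le hf
  have hGi : IntervalIntegrable (oddExtension f) volume (-π) π :=
    (intervalIntegrable_iff_integrableOn_Ioc_of_le (by linarith [Real.pi_pos])).2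
      (hG.integrable one_le_two)
  have he : Continuous fun x : ℝ => Complex.exp (-(k * x : ℝ) * Complex.I) := by fun_prop
  simp_rw [fourierCoeffOn_eq_integral, fourier_neg_coe_two_pi, smul_eq_mul]
  rw [integral_neg_self_eq_integral_add_comp_neg_s12 (hGi.continuousOn_mul he.continuousOn), sinCoeff,
    ← intervalIntegral.integral_const_mul, Complex.real_smul, ← intervalIntegral.integral_const_mul]
  refine integral_congr_ae (ae_of_all _ fun x hx => ?_)
  rw [uIoc_of_le Real.pi_pos.le] at hx
  rw [oddExtension_of_pos hx.1, oddExtension_neg_of_pos hx.1]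
  have := Complex.exp_neg_mul_I_sub_exp_mul_I (k * x : ℝ)
  push_cast at this ⊢
  field_simp
  linear_combination f x * this

theorem integral_sq_norm_oddExtension {f : ℝ → ℂ}
    (hf : MemLp f 2 (volume.restrict (Ioc 0 π))) :
    ∫ x in -π..π, ‖oddExtension f x‖ ^ 2 = 2 * ∫ x in 0..π, ‖f x‖ ^ 2 := by
  have hG := memLp_two_oddExtension Real.pi_pos.le hf
  have hGi : IntervalIntegrable (fun x => ‖oddExtension f x‖ ^ 2) volume (-π) π :=
    (intervalIntegrable_iff_integrableOn_Ioc_of_le (by linarith [Real.pi_pos])).2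
      ((memLp_two_iff_integrable_sq_norm hG.1).1 hG)
  rw [integral_neg_self_eq_integral_add_comp_neg_s12 hGi, ← intervalIntegral.integral_const_mul]
  refine integral_congr_ae (ae_of_all _ fun x hx => ?_)
  rw [uIoc_of_le Real.pi_pos.le] at hx
  rw [oddExtension_of_pos hx.1, oddExtension_neg_of_pos hx.1, norm_neg, two_mul]

-- Summing over `ℤ` counts every sine twice (`k` and `-k`), whence `π` rather than `π / 2`.
theorem hasSum_sq_norm_sinCoeff {f : ℝ → ℂ} (hf : MemLp f 2 (volume.restrict (Ioc 0 π))) :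
    HasSum (fun k : ℤ => ‖sinCoeff f k‖ ^ 2) (π * ∫ x in 0..π, ‖f x‖ ^ 2) := by
  have h := (hasSum_sq_fourierCoeffOn (neg_lt_self Real.pi_pos)
    (memLp_two_oddExtension Real.pi_pos.le hf)).mul_left (π ^ 2)
  simp_rw [fourierCoeffOn_oddExtension hf, integral_sq_norm_oddExtension hf] at h
  have hcoeff : ∀ k : ℤ, π ^ 2 * ‖-(Complex.I / π) * sinCoeff f k‖ ^ 2
      = ‖sinCoeff f k‖ ^ 2 := fun k => by
    rw [norm_mul, norm_neg, norm_div, Complex.norm_I, Complex.norm_real,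
      Real.norm_of_nonneg Real.pi_pos.le]
    field_simp
  have hsum : π ^ 2 * (π - -π)⁻¹ • (2 * ∫ x in 0..π, ‖f x‖ ^ 2)
      = π * ∫ x in 0..π, ‖f x‖ ^ 2 := by
    rw [smul_eq_mul]
    field_simp
    ring
  simpa only [hcoeff, hsum] using h

namespace IsDirichletEigenpair

variable {q : ℝ → ℂ} {lam : ℂ} {y : ℝ → ℂ}

theorem continuousOn (h : IsDirichletEigenpair q lam y) : ContinuousOn y (Icc 0 π) := by
  obtain ⟨g, -, hg, -, hy, -⟩ := h
  have hprim := continuousOn_primitive_interval' hg left_mem_uIcc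
  rw [uIcc_of_le Real.pi_pos.le] at hprim
  exact (continuousOn_const.add hprim).congr hy

theorem memLp (h : IsDirichletEigenpair q lam y) : MemLp y 2 (volume.restrict (Ioc 0 π)) := by
  obtain ⟨C, hC⟩ := isCompact_Icc.exists_bound_of_continuousOn h.continuousOn
  exact (MemLp.of_bound (h.continuousOn.aestronglyMeasurable measurableSet_Icc) C
    (ae_restrict_of_forall_mem measurableSet_Icc hC)).mono_measure
    (Measure.restrict_mono Ioc_subset_Icc_self le_rfl)

theorem memLp_mul {M : ℝ} (h : IsDirichletEigenpair q lam y)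
    (hq : ∀ x ∈ Ioc 0 π, ‖q x‖ ≤ M) :
    MemLp (fun x => q x * y x) 2 (volume.restrict (Ioc 0 π)) := by
  have hy := h.memLp
  have hmeas : AEStronglyMeasurable (fun x => q x * y x) (volume.restrict (Ioc 0 π)) := by
    obtain ⟨g, -, -, hqy, -⟩ := h
    exact (hqy.1.aestronglyMeasurable.add (hy.1.const_mul lam)).congr
      (ae_of_all _ fun x => by simp only [Pi.add_apply]; ring)
  refine hy.of_le_mul (c := M) hmeas ?_
  filter_upwards [ae_restrict_mem measurableSet_Ioc] with x hx
  rw [norm_mul]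
  exact mul_le_mul_of_nonneg_right (hq x hx) (norm_nonneg _)

theorem integral_mul_sin (h : IsDirichletEigenpair q lam y) (k : ℤ) :
    ∫ x in 0..π, q x * y x * (Real.sin (k * x) : ℂ) = (lam - (k : ℂ) ^ 2) * sinCoeff y k := by
  have hπ := Real.pi_pos.le
  have hyc := h.continuousOn
  obtain ⟨g, -, hg, hqy, hy, hg', hy0, hyπ⟩ := h
  have hsin : ∀ x, HasDerivAt (fun x => (Real.sin (k * x) : ℂ))
      ((Real.cos (k * x) * k : ℝ) : ℂ) x := fun x =>
    (((hasDerivAt_id x).const_mul (k : ℝ)).sin.ofReal_comp).congr_deriv (by simp)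
  have hcos : ∀ x, HasDerivAt (fun x => (Real.cos (k * x) : ℂ))
      ((-Real.sin (k * x) * k : ℝ) : ℂ) x := fun x =>
    (((hasDerivAt_id x).const_mul (k : ℝ)).cos.ofReal_comp).congr_deriv (by simp)
  have hA := integral_mul_deriv_eq_of_primitive hπ hqy hg' (fun x _ => hsin x)
    (Continuous.intervalIntegrable (by fun_prop) _ _)
  have hB := integral_mul_deriv_eq_of_primitive hπ hg hy (fun x _ => hcos x)
    (Continuous.intervalIntegrable (by fun_prop) _ _)
  simp only [Real.sin_int_mul_pi, mul_zero, Real.sin_zero, Complex.ofReal_zero, hy0, hyπ,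
    zero_mul, sub_zero, zero_sub] at hA hB
  have hsin_int : IntervalIntegrable (fun x => y x * (Real.sin (k * x) : ℂ)) volume 0 π :=
    (hyc.mul (by fun_prop)).intervalIntegrable_of_Icc hπ
  have hA' : (∫ x in 0..π, g x * (Real.cos (k * x) : ℂ)) * k
      = -∫ x in 0..π, (q x - lam) * y x * (Real.sin (k * x) : ℂ) := by
    rw [← hA, ← intervalIntegral.integral_mul_const]
    congr 1; ext x; push_cast; ring
  have hB' : sinCoeff y k * -k = -∫ x in 0..π, g x * (Real.cos (k * x) : ℂ) := by
    rw [← hB, sinCoeff, ← intervalIntegral.integral_mul_const]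
    congr 1; ext x; push_cast; ring
  have hsplit : ∫ x in 0..π, q x * y x * (Real.sin (k * x) : ℂ)
      = (∫ x in 0..π, (q x - lam) * y x * (Real.sin (k * x) : ℂ)) + lam * sinCoeff y k := by
    rw [sinCoeff, ← intervalIntegral.integral_const_mul, ← intervalIntegral.integral_add
      (hqy.mul_continuousOn (by fun_prop)) (hsin_int.const_mul lam)]
    congr 1; ext x; ring
  rw [hsplit]
  linear_combination hA' - (k : ℂ) * hB'

end IsDirichletEigenpair

theorem Int.two_mul_sub_one_le_abs_sq_sub_sq {k n : ℤ} (hn : 0 ≤ n) (h : k ^ 2 ≠ n ^ 2) :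
    2 * n - 1 ≤ |k ^ 2 - n ^ 2| := by
  have hk : |k| ≠ n := fun h' => h (by rw [← sq_abs, h'])
  rw [← sq_abs k]
  rcases lt_or_gt_of_ne hk with hlt | hgt
  · rw [abs_of_nonpos (by nlinarith [abs_nonneg k])]; nlinarith [abs_nonneg k]
  · rw [abs_of_nonneg (by nlinarith)]; nlinarith

theorem Int.three_le_abs_sq_sub_one {k : ℤ} (hk0 : k ≠ 0) (hk1 : k ^ 2 ≠ 1) :
    3 ≤ |k ^ 2 - 1| := by
  have h1 : 1 ≤ |k| := Int.one_le_abs hk0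
  have h2 : |k| ≠ 1 := fun h' => hk1 (by rw [← sq_abs, h']; norm_num)
  have h3 : 2 ≤ |k| := by omega
  rw [← sq_abs k, abs_of_nonneg (by nlinarith)]
  nlinarith

-- `γ = 3` for `n = 1` (the nearest admissible `k²` is `4`), and `γ = n² - (n - 1)²` otherwise.
theorem Cond1.exists_gap {M : ℝ} {n : ℕ} (hn : 1 ≤ n) (h : Cond1 M n) :
    ∃ γ : ℝ, 2 * M < γ ∧
      ∀ k : ℤ, k ≠ 0 → k ^ 2 ≠ (n : ℤ) ^ 2 → γ ≤ |(k : ℝ) ^ 2 - (n : ℝ) ^ 2| := by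
  rcases hn.eq_or_lt with rfl | hn1
  · refine ⟨3, by linarith [h.1 rfl], fun k hk0 hk1 => ?_⟩
    exact_mod_cast Int.three_le_abs_sq_sub_one hk0 (by simpa using hk1)
  · refine ⟨2 * n - 1, by linarith [h.2 hn1], fun k _ hk => ?_⟩
    exact_mod_cast Int.two_mul_sub_one_le_abs_sq_sub_sq (by positivity) hk

theorem IsDirichletEigenpair.sub_mul_norm_sinCoeff_le {q : ℝ → ℂ} {lam : ℂ} {y : ℝ → ℂ}
    {M γ : ℝ} {n : ℕ} (h : IsDirichletEigenpair q lam y) (hyn : sinCoeff y n = 0)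
    (hlam : ‖lam - (n : ℂ) ^ 2‖ ≤ M)
    (hgap : ∀ k : ℤ, k ≠ 0 → k ^ 2 ≠ (n : ℤ) ^ 2 → γ ≤ |(k : ℝ) ^ 2 - (n : ℝ) ^ 2|) (k : ℤ) :
    (γ - M) * ‖sinCoeff y k‖ ≤ ‖sinCoeff (fun x => q x * y x) k‖ := by
  by_cases hk : k = 0 ∨ k ^ 2 = (n : ℤ) ^ 2
  · rw [show sinCoeff y k = 0 from hk.elim (fun hk => hk ▸ sinCoeff_zero y)
      (sinCoeff_eq_zero_of_sq_eq hyn)]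
    simp
  push Not at hk
  have hkn : ‖(k : ℂ) ^ 2 - (n : ℂ) ^ 2‖ = |(k : ℝ) ^ 2 - (n : ℝ) ^ 2| := by
    rw [show (k : ℂ) ^ 2 - (n : ℂ) ^ 2 = (((k : ℝ) ^ 2 - (n : ℝ) ^ 2 : ℝ) : ℂ) by push_cast; rfl,
      Complex.norm_real, Real.norm_eq_abs]
  have hdist : γ - M ≤ ‖lam - (k : ℂ) ^ 2‖ := by
    have := norm_sub_le_norm_sub_add_norm_sub ((k : ℂ) ^ 2) lam ((n : ℂ) ^ 2)
    rw [hkn, norm_sub_rev] at this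
    linarith [hgap k hk.1 hk.2]
  rw [show sinCoeff (fun x => q x * y x) k = _ from h.integral_mul_sin k, norm_mul]
  exact mul_le_mul_of_nonneg_right hdist (norm_nonneg _)

theorem IsDirichletEigenpair.integral_sq_norm_eq_zero_of_sinCoeff_eq_zero {q : ℝ → ℂ} {lam : ℂ}
    {y : ℝ → ℂ} {M : ℝ} {n : ℕ} (h : IsDirichletEigenpair q lam y)
    (hq : ∀ x ∈ Ioc 0 π, ‖q x‖ ≤ M) (hn : 1 ≤ n) (hM : Cond1 M n)
    (hlam : ‖lam - (n : ℂ) ^ 2‖ ≤ M) (hyn : sinCoeff y n = 0) :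
    ∫ x in 0..π, ‖y x‖ ^ 2 = 0 := by
  obtain ⟨γ, hγ, hgap⟩ := hM.exists_gap hn
  have hM0 : 0 ≤ M := (norm_nonneg _).trans hlam
  have hcoeff (k : ℤ) : (γ - M) ^ 2 * ‖sinCoeff y k‖ ^ 2
      ≤ ‖sinCoeff (fun x => q x * y x) k‖ ^ 2 := by
    rw [← mul_pow]
    exact pow_le_pow_left₀ (by nlinarith [norm_nonneg (sinCoeff y k)])
      (h.sub_mul_norm_sinCoeff_le hyn hlam hgap k) 2
  have hle := hasSum_le hcoeff ((hasSum_sq_norm_sinCoeff h.memLp).mul_left _)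
    (hasSum_sq_norm_sinCoeff (h.memLp_mul hq))
  have hL2 := integral_sq_norm_mul_le Real.pi_pos.le h.memLp hq
  have hS : 0 ≤ ∫ x in 0..π, ‖y x‖ ^ 2 :=
    integral_nonneg Real.pi_pos.le fun x _ => by positivity
  have hgapM : M ^ 2 < (γ - M) ^ 2 := by nlinarith
  refine le_antisymm ?_ hS
  by_contra! hpos
  nlinarith [mul_le_mul_of_nonneg_left hL2 Real.pi_pos.le,
    mul_pos (mul_pos Real.pi_pos (sub_pos.2 hgapM)) hpos]

theorem stmt12_general
    (a b c : ℝ) (q : ℝ → ℝ)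
    (hb : 0 < b)
    (hqa : ∀ x ∈ Set.Icc (0:ℝ) c, q x = a)
    (hqb : ∀ x ∈ Set.Ioc c Real.pi, q x = b)
    (n : ℕ) (hn : 1 ≤ n) (hcond : Cond1 (max |a| b) n)
    (lam : ℂ) (Psi : ℝ → ℂ)
    (hev : IsDirichletEigenpair (fun x => (q x : ℂ)) lam Psi)
    (hbd : ‖lam - ((n : ℂ))^2‖ ≤ max |a| b)
    (hnorm : (∫ x in (0:ℝ)..Real.pi, ‖Psi x‖^2) = 1) :
    (∫ x in (0:ℝ)..Real.pi, Psi x * (Real.sin ((n : ℝ) * x) : ℂ)) ≠ 0 := by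
  have hq : ∀ x ∈ Ioc 0 Real.pi, ‖(q x : ℂ)‖ ≤ max |a| b := by
    intro x hx
    rw [Complex.norm_real, Real.norm_eq_abs]
    rcases le_or_gt x c with hxc | hxc
    · rw [hqa x ⟨hx.1.le, hxc⟩]
      exact le_max_left _ _
    · rw [hqb x ⟨hxc, hx.2⟩, abs_of_pos hb]
      exact le_max_right _ _
  intro h0
  have := hev.integral_sq_norm_eq_zero_of_sinCoeff_eq_zero hq hn hcond hbd
    (by simpa [sinCoeff] using h0)
  rw [hnorm] at this
  exact one_ne_zero this

/-- For the Kronig–Penney potential, `n ≥ 1` satisfying Condition 1,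
a Dirichlet eigenvalue `λ_n` with `|λ_n − n²| ≤ M` and a corresponding normalized
eigenfunction `Ψ_n`, one has `∫₀^π Ψ_n(x) sin(nx) dx ≠ 0`. -/
theorem stmt12
    (a b c : ℝ) (q : ℝ → ℝ)
    (hc : c ∈ Set.Ioo (0:ℝ) Real.pi) (ha : a < 0) (hb : 0 < b)
    (habc : (b - a) * c = b * Real.pi)
    (hqa : ∀ x ∈ Set.Icc (0:ℝ) c, q x = a)
    (hqb : ∀ x ∈ Set.Ioc c Real.pi, q x = b)
    (n : ℕ) (hn : 1 ≤ n) (hcond : Cond1 (max |a| b) n)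
    (lam : ℂ) (Psi : ℝ → ℂ)
    (hev : IsDirichletEigenpair (fun x => (q x : ℂ)) lam Psi)
    (hbd : ‖lam - ((n : ℂ))^2‖ ≤ max |a| b)
    (hnorm : (∫ x in (0:ℝ)..Real.pi, ‖Psi x‖^2) = 1) :
    (∫ x in (0:ℝ)..Real.pi, Psi x * (Real.sin ((n : ℝ) * x) : ℂ)) ≠ 0 :=
  stmt12_general a b c q hb hqa hqb n hn hcond lam Psi hev hbd hnorm
end

section
/- Let q be the Kronig–Penney potential and let Q(x) = ∫₀ˣ q(t) dt, so that Q(x) = ax for x ∈ [0,c] and Q(x) = bx − bπ for x ∈ (c,π]. Then for every positive integer n, −(1/π) ∫₀^π Q(x)² cos(2nx) dx = ( ab cos(2nc) )/(2n²) − ( (b² − a²) sin(2nc) )/(4πn³). -/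
open MeasureTheory Filter Asymptotics

/-!
`Q` is `a x` on `[0,c]` and, because `(b - a) c = b π`, it is `b (x - π)` on `[c,π]`. An explicit
antiderivative of `(x - s)² cos (k x)` evaluates both pieces of `∫₀^π Q² cos (k x)`. For `k = 2n`
the boundary terms at `0` and `π` vanish, the `sin (kc) / k` terms cancel because
`a c = b (c - π)`, and what remains is the claimed combination of `cos (2nc)` and `sin (2nc)`.
-/

open Real Set intervalIntegral
open scoped Interval

noncomputable def sqMulCosAntideriv (k s x : ℝ) : ℝ :=
  (x - s) ^ 2 / k * sin (k * x) + 2 * (x - s) / k ^ 2 * cos (k * x) - 2 / k ^ 3 * sin (k * x)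

lemma hasDerivAt_sqMulCosAntideriv {k : ℝ} (hk : k ≠ 0) (s x : ℝ) :
    HasDerivAt (sqMulCosAntideriv k s) ((x - s) ^ 2 * cos (k * x)) x := by
  have hkx : HasDerivAt (fun x : ℝ => k * x) k x := by
    simpa using (hasDerivAt_id x).const_mul k
  have hsin := hkx.sin
  have hcos := hkx.cos
  have hsq : HasDerivAt (fun x : ℝ => (x - s) ^ 2) (2 * (x - s)) x := by
    simpa using ((hasDerivAt_id x).sub_const s).fun_pow 2
  have hlin : HasDerivAt (fun x : ℝ => 2 * (x - s)) 2 x := by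
    simpa using ((hasDerivAt_id x).sub_const s).const_mul 2
  refine ((((hsq.div_const k).fun_mul hsin).fun_add ((hlin.div_const (k ^ 2)).fun_mul hcos)).fun_sub
    (hsin.const_mul (2 / k ^ 3))).congr_deriv ?_
  field_simp
  ring

lemma integral_sub_sq_mul_cos {k : ℝ} (hk : k ≠ 0) (s l u : ℝ) :
    ∫ x in l..u, (x - s) ^ 2 * cos (k * x) = sqMulCosAntideriv k s u - sqMulCosAntideriv k s l :=
  integral_eq_sub_of_hasDerivAt (fun x _ => hasDerivAt_sqMulCosAntideriv hk s x)
    ((by fun_prop : Continuous fun x => (x - s) ^ 2 * cos (k * x)).intervalIntegrable _ _)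

lemma integral_eq_of_eqOn_uIoc {f : ℝ → ℝ} {l u m : ℝ} (h : EqOn f (fun _ => m) (Ι l u)) :
    ∫ t in l..u, f t = (u - l) * m := by
  rw [integral_congr_ae (ae_of_all _ h), intervalIntegral.integral_const, smul_eq_mul]

lemma intervalIntegrable_of_eqOn_uIoc {f : ℝ → ℝ} {l u m : ℝ} (h : EqOn f (fun _ => m) (Ι l u)) :
    IntervalIntegrable f volume l u :=
  intervalIntegrable_const.congr h.symm

section KronigPenney

variable {a b c : ℝ} {q : ℝ → ℝ}
  (hqa : ∀ x ∈ Icc 0 c, q x = a) (hqb : ∀ x ∈ Ioc c π, q x = b)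
include hqa

lemma eqOn_uIoc_of_kronigPenney_left {x : ℝ} (hx : x ∈ Icc 0 c) : EqOn q (fun _ => a) (Ι 0 x) := by
  rw [uIoc_of_le hx.1]
  exact fun t ht => hqa t ⟨ht.1.le, ht.2.trans hx.2⟩

lemma primitive_kronigPenney_left {x : ℝ} (hx : x ∈ Icc 0 c) : ∫ t in 0..x, q t = a * x := by
  rw [integral_eq_of_eqOn_uIoc (eqOn_uIoc_of_kronigPenney_left hqa hx)]
  ring

include hqb

lemma primitive_kronigPenney_right (hc : 0 ≤ c) (habc : (b - a) * c = b * π) {x : ℝ}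
    (hx : x ∈ Icc c π) : ∫ t in 0..x, q t = b * (x - π) := by
  have hright : EqOn q (fun _ => b) (Ι c x) := by
    rw [uIoc_of_le hx.1]
    exact fun t ht => hqb t ⟨ht.1, ht.2.trans hx.2⟩
  have hleft := eqOn_uIoc_of_kronigPenney_left hqa (right_mem_Icc.2 hc)
  rw [← integral_add_adjacent_intervals (intervalIntegrable_of_eqOn_uIoc hleft)
    (intervalIntegrable_of_eqOn_uIoc hright), integral_eq_of_eqOn_uIoc hleft,
    integral_eq_of_eqOn_uIoc hright]
  linear_combination -habc

lemma integral_primitive_kronigPenney_sq_mul_cos (hc : c ∈ Icc 0 π) (habc : (b - a) * c = b * π)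
    (k : ℝ) :
    ∫ x in 0..π, (∫ t in 0..x, q t) ^ 2 * cos (k * x)
      = a ^ 2 * (∫ x in 0..c, (x - 0) ^ 2 * cos (k * x))
        + b ^ 2 * ∫ x in c..π, (x - π) ^ 2 * cos (k * x) := by
  have hleft : EqOn (fun x => (∫ t in 0..x, q t) ^ 2 * cos (k * x))
      (fun x => a ^ 2 * ((x - 0) ^ 2 * cos (k * x))) (uIcc 0 c) := by
    intro x hx
    rw [uIcc_of_le hc.1] at hx
    simp only [primitive_kronigPenney_left hqa hx]
    ring
  have hright : EqOn (fun x => (∫ t in 0..x, q t) ^ 2 * cos (k * x))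
      (fun x => b ^ 2 * ((x - π) ^ 2 * cos (k * x))) (uIcc c π) := by
    intro x hx
    rw [uIcc_of_le hc.2] at hx
    simp only [primitive_kronigPenney_right hqa hqb hc.1 habc hx]
    ring
  have hint_left := ((by fun_prop : Continuous fun x => a ^ 2 * ((x - 0) ^ 2 * cos (k * x))
    ).continuousOn.congr hleft).intervalIntegrable (μ := volume)
  have hint_right := ((by fun_prop : Continuous fun x => b ^ 2 * ((x - π) ^ 2 * cos (k * x))
    ).continuousOn.congr hright).intervalIntegrable (μ := volume)
  rw [← integral_add_adjacent_intervals hint_left hint_right, integral_congr hleft,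
    integral_congr hright, intervalIntegral.integral_const_mul,
    intervalIntegral.integral_const_mul]

end KronigPenney

theorem stmt18_general
    (a b c : ℝ) (q : ℝ → ℝ)
    (hc : c ∈ Set.Ioo (0:ℝ) Real.pi)
    (habc : (b - a) * c = b * Real.pi)
    (hqa : ∀ x ∈ Set.Icc (0:ℝ) c, q x = a)
    (hqb : ∀ x ∈ Set.Ioc c Real.pi, q x = b)
    (n : ℕ) (hn : 1 ≤ n) :
    -(1 / Real.pi) *
        ∫ x in (0:ℝ)..Real.pi, (∫ t in (0:ℝ)..x, q t)^2 * Real.cos (2 * (n : ℝ) * x)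
      = a * b * Real.cos (2 * (n : ℝ) * c) / (2 * (n : ℝ)^2) -
        (b^2 - a^2) * Real.sin (2 * (n : ℝ) * c) / (4 * Real.pi * (n : ℝ)^3) := by
  have hk : 2 * (n : ℝ) ≠ 0 := by positivity
  have hsin : sin (2 * n * π) = 0 := by simpa [mul_assoc] using sin_nat_mul_pi (2 * n)
  have hcos : cos (2 * n * π) = 1 := by
    rw [show 2 * (n : ℝ) * π = n * (2 * π) by ring]
    exact cos_nat_mul_two_pi n
  rw [integral_primitive_kronigPenney_sq_mul_cos hqa hqb (Ioo_subset_Icc_self hc) habc,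
    integral_sub_sq_mul_cos hk, integral_sub_sq_mul_cos hk]
  simp only [sqMulCosAntideriv, hsin, hcos, sub_self, mul_zero, sin_zero, cos_zero]
  -- The two sides differ by a multiple of `(b - a) c - b π`, up to a factor `π⁻¹ π`.
  linear_combination
    (1 / π) * (sin (2 * n * c) / (2 * n) * (a * c + b * (c - π))
      + 2 * (a + b) * cos (2 * n * c) / (2 * n) ^ 2) * habc
    + a * b * cos (2 * n * c) / (2 * n ^ 2) * mul_inv_cancel₀ pi_ne_zero

/-- For the Kronig–Penney potential, with `Q(x) = ∫₀ˣ q(t) dt`, for every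
positive integer `n`,
`−(1/π)∫₀^π Q(x)² cos(2nx) dx = ab cos(2nc)/(2n²) − (b² − a²) sin(2nc)/(4πn³)`. -/
theorem stmt18
    (a b c : ℝ) (q : ℝ → ℝ)
    (hc : c ∈ Set.Ioo (0:ℝ) Real.pi) (ha : a < 0) (hb : 0 < b)
    (habc : (b - a) * c = b * Real.pi)
    (hqa : ∀ x ∈ Set.Icc (0:ℝ) c, q x = a)
    (hqb : ∀ x ∈ Set.Ioc c Real.pi, q x = b)
    (n : ℕ) (hn : 1 ≤ n) :
    -(1 / Real.pi) *
        ∫ x in (0:ℝ)..Real.pi, (∫ t in (0:ℝ)..x, q t)^2 * Real.cos (2 * (n : ℝ) * x)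
      = a * b * Real.cos (2 * (n : ℝ) * c) / (2 * (n : ℝ)^2) -
        (b^2 - a^2) * Real.sin (2 * (n : ℝ) * c) / (4 * Real.pi * (n : ℝ)^3) :=
  stmt18_general a b c q hc habc hqa hqb n hn
end

section
/- Let (λ_n)_{n≥1} be a sequence of complex numbers with λ_n = n² + O(1/n). Then for all sufficiently large n, λ_n ≠ (n+k)² for every integer k ∉ {0, −2n}, and Σ_{k ∈ ℤ, k ≠ 0, k ≠ −2n} | 1/( λ_n − (n+k)² ) − 1/( n² − (n+k)² ) | = O(1/n³) as n → ∞. -/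
open Filter Asymptotics

/-! Write `λ_n = n² + ε_n` and `d_k = n² − (n + k)² = −k (k + 2n)`. For `k ∉ {0, −2n}` we have
`|d_k| ≥ n`, while eventually `|ε_n| ≤ n / 2`, so `|1/(d_k + ε_n) − 1/d_k| ≤ 2 |ε_n| / |d_k|²`.
As `1/(k (k + 2n)) = (1/k − 1/(k + 2n)) / (2n)`, this is at most
`|ε_n| / n² · (1/k² + 1/(k + 2n)²)`, whose sum over `k` is `O(|ε_n| / n²) = O(1/n³)`. -/

lemma norm_inv_add_sub_inv_le {𝕜 : Type*} [NormedField 𝕜] {d ε : 𝕜} (hd : d ≠ 0)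
    (hε : ‖ε‖ ≤ ‖d‖ / 2) :
    d + ε ≠ 0 ∧ ‖(d + ε)⁻¹ - d⁻¹‖ ≤ 2 * ‖ε‖ / ‖d‖ ^ 2 := by
  have hd' : 0 < ‖d‖ := norm_pos_iff.mpr hd
  have hlow : ‖d‖ / 2 ≤ ‖d + ε‖ := by
    have := norm_sub_norm_le d (-ε)
    rw [sub_neg_eq_add, norm_neg] at this
    linarith
  have hdε : d + ε ≠ 0 := norm_pos_iff.mp (by linarith)
  refine ⟨hdε, ?_⟩
  have hdiff : (d + ε)⁻¹ - d⁻¹ = -ε / ((d + ε) * d) := by field_simp; ring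
  calc ‖(d + ε)⁻¹ - d⁻¹‖ = ‖ε‖ / (‖d + ε‖ * ‖d‖) := by
        rw [hdiff, norm_div, norm_neg, norm_mul]
    _ ≤ ‖ε‖ / (‖d‖ / 2 * ‖d‖) := by gcongr
    _ = 2 * ‖ε‖ / ‖d‖ ^ 2 := by field_simp

lemma abs_sub_le_two_mul_abs_mul_abs {a b : ℤ} (ha : a ≠ 0) (hb : b ≠ 0) :
    |b - a| ≤ 2 * (|a| * |b|) := by
  have ha' : 1 ≤ |a| := Int.one_le_abs ha
  have hb' : 1 ≤ |b| := Int.one_le_abs hb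
  have := abs_sub b a
  nlinarith

lemma sq_sub_div_mul_le {K : Type*} [Field K] [LinearOrder K] [IsStrictOrderedRing K]
    {x y : K} (hx : x ≠ 0) (hy : y ≠ 0) :
    ((y - x) / (x * y)) ^ 2 ≤ 2 * (1 / x ^ 2 + 1 / y ^ 2) := by
  have h : (y - x) / (x * y) = 1 / x + -(1 / y) := by field_simp; ring
  simpa [h, div_pow] using add_sq_le (a := 1 / x) (b := -(1 / y))

lemma summable_one_div_int_add_sq (m : ℤ) : Summable fun k : ℤ => 1 / ((k : ℝ) + m) ^ 2 := by
  have h := (Equiv.addRight m).summable_iff.mpr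
    (Real.summable_one_div_int_pow.mpr one_lt_two)
  simpa only [Function.comp_def, Equiv.coe_addRight, Int.cast_add] using h

lemma tsum_one_div_int_add_sq (m : ℤ) :
    ∑' k : ℤ, 1 / ((k : ℝ) + m) ^ 2 = ∑' k : ℤ, 1 / (k : ℝ) ^ 2 := by
  simpa only [Equiv.coe_addRight, Int.cast_add] using
    (Equiv.addRight m).tsum_eq fun k : ℤ => 1 / (k : ℝ) ^ 2

lemma norm_natCast_sq_sub_add_sq (n : ℕ) (k : ℤ) :
    ‖(n : ℂ) ^ 2 - ((n : ℂ) + k) ^ 2‖ = |(k : ℝ)| * |(k : ℝ) + 2 * n| := by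
  have h : (n : ℂ) ^ 2 - ((n : ℂ) + k) ^ 2 = ((-(k * (k + 2 * n)) : ℤ) : ℂ) := by
    push_cast; ring
  rw [h, Complex.norm_intCast]
  push_cast
  rw [abs_neg, abs_mul]

lemma norm_one_div_sub_sq_sub_le {n : ℕ} (hn : 0 < n) {k : ℤ} (hk : k ≠ 0)
    (hk' : k ≠ -(2 * (n : ℤ))) {z : ℂ} (hz : ‖z - (n : ℂ) ^ 2‖ ≤ n / 2) :
    z ≠ ((n : ℂ) + k) ^ 2 ∧
      ‖1 / (z - ((n : ℂ) + k) ^ 2) - 1 / ((n : ℂ) ^ 2 - ((n : ℂ) + k) ^ 2)‖ ≤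
        ‖z - (n : ℂ) ^ 2‖ / (n : ℝ) ^ 2 * (1 / (k : ℝ) ^ 2 + 1 / ((k : ℝ) + 2 * n) ^ 2) := by
  set d : ℂ := (n : ℂ) ^ 2 - ((n : ℂ) + k) ^ 2
  set ε : ℂ := z - (n : ℂ) ^ 2
  have hnR : (0 : ℝ) < n := by exact_mod_cast hn
  have hkR : (k : ℝ) ≠ 0 := by exact_mod_cast hk
  have hk'R : (k : ℝ) + 2 * n ≠ 0 := by
    have : k + 2 * (n : ℤ) ≠ 0 := by omega
    exact_mod_cast this
  have hnd : (n : ℝ) ≤ ‖d‖ := by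
    have h := abs_sub_le_two_mul_abs_mul_abs (a := k) (b := k + 2 * n) hk (by omega)
    have h' : (2 * n : ℝ) ≤ 2 * (|(k : ℝ)| * |(k : ℝ) + 2 * n|) := by
      rw [add_sub_cancel_left, abs_of_nonneg (by positivity)] at h
      exact_mod_cast h
    rw [norm_natCast_sq_sub_add_sq]
    linarith
  have hd : d ≠ 0 := norm_pos_iff.mp (hnR.trans_le hnd)
  obtain ⟨hne, hle⟩ := norm_inv_add_sub_inv_le hd (ε := ε) (by linarith)
  have hsplit : z - ((n : ℂ) + k) ^ 2 = d + ε := by ring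
  refine ⟨fun h => hne (by rw [← hsplit, h, sub_self]), ?_⟩
  have hsq := sq_sub_div_mul_le hkR hk'R
  rw [add_sub_cancel_left] at hsq
  rw [hsplit, one_div, one_div]
  calc ‖(d + ε)⁻¹ - d⁻¹‖ ≤ 2 * ‖ε‖ / ‖d‖ ^ 2 := hle
    _ = ‖ε‖ / (n : ℝ) ^ 2 * (((2 * n) / ((k : ℝ) * ((k : ℝ) + 2 * n))) ^ 2 / 2) := by
        rw [norm_natCast_sq_sub_add_sq, ← abs_mul, sq_abs]
        field_simp
    _ ≤ ‖ε‖ / (n : ℝ) ^ 2 * (1 / (k : ℝ) ^ 2 + 1 / ((k : ℝ) + 2 * n) ^ 2) := by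
        gcongr
        linarith

lemma tsum_norm_one_div_sub_sq_sub_le {n : ℕ} (hn : 0 < n) {z : ℂ}
    (hz : ‖z - (n : ℂ) ^ 2‖ ≤ n / 2) :
    (∑' k : ℤ, if k ≠ 0 ∧ k ≠ -(2 * (n : ℤ)) then
        ‖1 / (z - ((n : ℂ) + (k : ℂ)) ^ 2) - 1 / ((n : ℂ) ^ 2 - ((n : ℂ) + (k : ℂ)) ^ 2)‖
      else 0) ≤ 2 * (∑' k : ℤ, 1 / (k : ℝ) ^ 2) * (‖z - (n : ℂ) ^ 2‖ / (n : ℝ) ^ 2) := by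
  set c := ‖z - (n : ℂ) ^ 2‖ / (n : ℝ) ^ 2
  have hS : Summable fun k : ℤ => 1 / (k : ℝ) ^ 2 := Real.summable_one_div_int_pow.mpr one_lt_two
  have hshift : ∀ k : ℤ, (k : ℝ) + 2 * n = k + ((2 * n : ℤ) : ℝ) := by intro k; push_cast; rfl
  have hg : Summable fun k : ℤ => c * (1 / (k : ℝ) ^ 2 + 1 / ((k : ℝ) + 2 * n) ^ 2) := by
    simp_rw [hshift]
    exact (hS.add (summable_one_div_int_add_sq _)).mul_left c
  have hfg : ∀ k : ℤ, (if k ≠ 0 ∧ k ≠ -(2 * (n : ℤ)) then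
        ‖1 / (z - ((n : ℂ) + (k : ℂ)) ^ 2) - 1 / ((n : ℂ) ^ 2 - ((n : ℂ) + (k : ℂ)) ^ 2)‖
      else 0) ≤ c * (1 / (k : ℝ) ^ 2 + 1 / ((k : ℝ) + 2 * n) ^ 2) := by
    intro k
    split_ifs with hk
    · exact (norm_one_div_sub_sq_sub_le hn hk.1 hk.2 hz).2
    · positivity
  calc _ ≤ ∑' k : ℤ, c * (1 / (k : ℝ) ^ 2 + 1 / ((k : ℝ) + 2 * n) ^ 2) :=
        Summable.tsum_le_tsum hfg (hg.of_nonneg_of_le (fun k => by positivity) hfg) hg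
    _ = 2 * (∑' k : ℤ, 1 / (k : ℝ) ^ 2) * c := by
        simp_rw [hshift]
        rw [tsum_mul_left, hS.tsum_add (summable_one_div_int_add_sq _), tsum_one_div_int_add_sq]
        ring

/-- Let `(λ_n)` be a sequence of complex numbers with `λ_n = n² + O(1/n)`.
Then for all sufficiently large `n`, `λ_n ≠ (n+k)²` for every integer `k ∉ {0, −2n}`, and
`Σ_{k ≠ 0, −2n} |1/(λ_n − (n+k)²) − 1/(n² − (n+k)²)| = O(1/n³)` as `n → ∞`. -/
theorem stmt19 (lam : ℕ → ℂ)
    (hlam : (fun n : ℕ => lam n - ((n : ℂ))^2) =O[atTop] fun n : ℕ => 1 / (n : ℝ)) :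
    (∀ᶠ n : ℕ in atTop, ∀ k : ℤ, k ≠ 0 → k ≠ -(2 * (n : ℤ)) →
        lam n ≠ ((n : ℂ) + (k : ℂ))^2) ∧
    (fun n : ℕ => ∑' k : ℤ,
        if k ≠ 0 ∧ k ≠ -(2 * (n : ℤ)) then
          ‖1 / (lam n - ((n : ℂ) + (k : ℂ))^2) -
            1 / (((n : ℂ))^2 - ((n : ℂ) + (k : ℂ))^2)‖
        else 0)
      =O[atTop] fun n : ℕ => 1 / (n : ℝ)^3 := by
  have hsmall : ∀ᶠ n : ℕ in atTop, 0 < n ∧ ‖lam n - (n : ℂ) ^ 2‖ ≤ n / 2 := by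
    have hlim := tendsto_zero_iff_norm_tendsto_zero.mp
      (hlam.trans_tendsto tendsto_one_div_atTop_nhds_zero_nat)
    filter_upwards [eventually_gt_atTop 0, hlim.eventually_le_const one_half_pos] with n hn hle
    refine ⟨hn, hle.trans ?_⟩
    have : (1 : ℝ) ≤ n := by exact_mod_cast hn
    linarith
  refine ⟨?_, ?_⟩
  · filter_upwards [hsmall] with n ⟨hn, hz⟩ k hk hk'
    exact (norm_one_div_sub_sq_sub_le hn hk hk' hz).1
  · refine IsBigO.trans (g := fun n : ℕ => ‖lam n - (n : ℂ) ^ 2‖ / (n : ℝ) ^ 2) ?_ ?_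
    · refine .of_bound (2 * ∑' k : ℤ, 1 / (k : ℝ) ^ 2) ?_
      filter_upwards [hsmall] with n ⟨hn, hz⟩
      rw [Real.norm_of_nonneg (tsum_nonneg fun k => by split_ifs <;> positivity),
        Real.norm_of_nonneg (by positivity)]
      exact tsum_norm_one_div_sub_sq_sub_le hn hz
    · have h := hlam.norm_left.mul (isBigO_refl (fun n : ℕ => 1 / (n : ℝ) ^ 2) atTop)
      simpa only [div_eq_mul_one_div ‖_‖, one_div_mul_one_div, ← pow_succ'] using h
end
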